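/- The cartesian product of two prismal submonoids C₁ ⊆ ℤ^{d₁} and C₂ ⊆ ℤ^{d₂} is a prismal submonoid of ℤ^{d₁+d₂}. -/

import Mathlib

/-- Canonical embedding of `ℤⁿ` into `ℝⁿ`. -/
def coeR {n : ℕ} (α : Fin n → ℤ) : Fin n → ℝ := fun i => (α i : ℝ)

/-- Convex hull in `ℝⁿ` of a subset of `ℤⁿ`. -/
def convC {n : ℕ} (C : Set (Fin n → ℤ)) : Set (Fin n → ℝ) :=
  convexHull ℝ (coeR '' C)

/-- The closure `cl(C) = ℤⁿ ∩ topological-closure(conv C)` of a subset of `ℤⁿ`. -/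
def intCl {n : ℕ} (C : Set (Fin n → ℤ)) : Set (Fin n → ℤ) :=
  {α | coeR α ∈ closure (convC C)}

/-- `C` is pure: `kα ∈ C` with `k ≥ 1` implies `α ∈ C`. -/
def IsPure {n : ℕ} (C : Set (Fin n → ℤ)) : Prop :=
  ∀ (k : ℕ) (α : Fin n → ℤ), 1 ≤ k → k • α ∈ C → α ∈ C

/-- `C` is a submonoid of `(ℤⁿ, +)` (as a set). -/
def IsSubmonoidSet {n : ℕ} (C : Set (Fin n → ℤ)) : Prop :=
  (0 : Fin n → ℤ) ∈ C ∧ ∀ a ∈ C, ∀ b ∈ C, a + b ∈ C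

/-- `M` is a finitely generated monoid (as a subset of `ℤⁿ`). -/
def IsFGSet {n : ℕ} (M : Set (Fin n → ℤ)) : Prop :=
  ∃ F : Finset (Fin n → ℤ),
    (AddSubmonoid.closure (F : Set (Fin n → ℤ)) : Set (Fin n → ℤ)) = M

/-- `C` is almost prismal: for every real subspace `V ⊆ ℝⁿ`, `cl(C ∩ V)` is finitely generated. -/
def AlmostPrismal {n : ℕ} (C : Set (Fin n → ℤ)) : Prop :=
  ∀ V : Submodule ℝ (Fin n → ℝ), IsFGSet (intCl {α ∈ C | coeR α ∈ V})

/-- `C` is prismal: pure and almost prismal. -/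
def Prismal {n : ℕ} (C : Set (Fin n → ℤ)) : Prop := IsPure C ∧ AlmostPrismal C


/-!
Purity passes to `C₁ × C₂` coordinatewise. For almost prismality fix a subspace `U`, put
`D = (C₁ × C₂) ∩ U` and let `Vᵢ` be the real span of the `i`-th projection of `D`. Then `cl D`
consists of the lattice points `z ∈ U` whose projections lie in `cl (Cᵢ ∩ Vᵢ)`; this is the
intersection of the finitely generated monoid `cl (C₁ ∩ V₁) × cl (C₂ ∩ V₂)` with a subgroup, hence
finitely generated by Dickson's lemma.

The inclusion `⊇` is the heart of the matter. Choose `w ∈ D` whose projections are interior points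
of the real cones over `Cᵢ ∩ Vᵢ` relative to `Vᵢ`. Then the projections of `m • z + w` lie in those
cones, hence in `Cᵢ`, because a pure submonoid contains every lattice point of its real cone
(Carathéodory reduces to linearly independent generators, whose coefficients are then rational).
So `m • z + w ∈ D` for all `m`, and `z = lim (m • z + w) / m` lies in `cl D`.
-/

open Submodule

lemma coeR_injective {n : ℕ} : Function.Injective (coeR (n := n)) :=
  fun _ _ h => funext fun i => Int.cast_injective (α := ℝ) (congrFun h i)

def coeRHom (n : ℕ) : (Fin n → ℤ) →+ (Fin n → ℝ) := (Int.castAddHom ℝ).compLeft (Fin n)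

@[simp] lemma coeRHom_apply {n : ℕ} (α : Fin n → ℤ) : coeRHom n α = coeR α := rfl

@[simp] lemma coeR_zero {n : ℕ} : coeR (0 : Fin n → ℤ) = 0 := map_zero (coeRHom n)

@[simp] lemma coeR_add {n : ℕ} (α β : Fin n → ℤ) : coeR (α + β) = coeR α + coeR β :=
  map_add (coeRHom n) α β

@[simp] lemma coeR_nsmul {n : ℕ} (k : ℕ) (α : Fin n → ℤ) : coeR (k • α) = (k : ℝ) • coeR α := by
  rw [Nat.cast_smul_eq_nsmul]
  exact map_nsmul (coeRHom n) k α

def IsSubmonoidSet.toAddSubmonoid {n : ℕ} {C : Set (Fin n → ℤ)} (hC : IsSubmonoidSet C) :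
    AddSubmonoid (Fin n → ℤ) where
  carrier := C
  zero_mem' := hC.1
  add_mem' {a b} ha hb := hC.2 a ha b hb

lemma PointedCone.exists_finset_of_mem_hull_image {𝕜 E ι : Type*} [Semiring 𝕜] [PartialOrder 𝕜]
    [IsOrderedRing 𝕜] [AddCommGroup E] [Module 𝕜 E] {v : ι → E} {s : Set ι} {x : E}
    (hx : x ∈ PointedCone.hull 𝕜 (v '' s)) :
    ∃ t : Finset ι, ↑t ⊆ s ∧ ∃ f : ι → 𝕜, (∀ i, 0 ≤ f i) ∧ ∑ i ∈ t, f i • v i = x := by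
  obtain ⟨l, hl, rfl⟩ := (Finsupp.mem_span_image_iff_linearCombination _).1 hx
  exact ⟨l.support, hl, fun i => l i, fun i => (l i).2, rfl⟩

section Caratheodory

variable {𝕜 E ι : Type*} [Field 𝕜] [LinearOrder 𝕜] [IsStrictOrderedRing 𝕜]
  [AddCommGroup E] [Module 𝕜 E]

/-- Moving a nonnegative combination along a dependency `g` until the first coefficient vanishes:
the step is the least ratio `f j / g j` over the indices with `g j > 0`. -/
lemma exists_sum_erase_smul_eq [DecidableEq ι] {v : ι → E} {s : Finset ι} {f g : ι → 𝕜}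
    (hf : ∀ i ∈ s, 0 ≤ f i) (hg : ∑ i ∈ s, g i • v i = 0) (hpos : ∃ i ∈ s, 0 < g i) :
    ∃ j ∈ s, ∃ f' : ι → 𝕜, (∀ i ∈ s.erase j, 0 ≤ f' i) ∧
      ∑ i ∈ s.erase j, f' i • v i = ∑ i ∈ s, f i • v i := by
  obtain ⟨j, hj, hmin⟩ := Finset.exists_min_image (s.filter (0 < g ·)) (fun i => f i / g i)
    (by simpa [Finset.filter_nonempty_iff] using hpos)
  rw [Finset.mem_filter] at hj
  set μ := f j / g j
  have hμ : 0 ≤ μ := div_nonneg (hf j hj.1) hj.2.le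
  refine ⟨j, hj.1, fun i => f i - μ * g i, fun i hi => ?_, ?_⟩
  · have hi := Finset.mem_of_mem_erase hi
    rcases le_or_gt (g i) 0 with hgi | hgi
    · nlinarith [hf i hi]
    · rw [sub_nonneg, ← le_div_iff₀ hgi]
      exact hmin i (Finset.mem_filter.2 ⟨hi, hgi⟩)
  · rw [Finset.sum_erase s (by simp [μ, div_mul_cancel₀ _ hj.2.ne'])]
    simp only [sub_smul, Finset.sum_sub_distrib, mul_smul, ← Finset.smul_sum, hg, smul_zero,
      sub_zero]

theorem exists_linearIndepOn_sum_smul_eq (v : ι → E) (s : Finset ι) {f : ι → 𝕜}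
    (hf : ∀ i ∈ s, 0 ≤ f i) :
    ∃ t ⊆ s, LinearIndepOn 𝕜 v t ∧
      ∃ g : ι → 𝕜, (∀ i ∈ t, 0 ≤ g i) ∧ ∑ i ∈ t, g i • v i = ∑ i ∈ s, f i • v i := by
  classical
  induction s using Finset.strongInduction generalizing f with
  | H s ih =>
  by_cases hli : LinearIndepOn 𝕜 v s
  · exact ⟨s, subset_rfl, hli, f, hf, rfl⟩
  obtain ⟨g, hg, i, hi, hgi⟩ := not_linearIndepOn_finset_iff.1 hli
  obtain ⟨j, hj, f', hf', hsum⟩ : ∃ j ∈ s, ∃ f' : ι → 𝕜, (∀ i ∈ s.erase j, 0 ≤ f' i) ∧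
      ∑ i ∈ s.erase j, f' i • v i = ∑ i ∈ s, f i • v i := by
    rcases hgi.lt_or_gt with h | h
    · exact exists_sum_erase_smul_eq (g := -g) hf (by simp [neg_smul, hg])
        ⟨i, hi, neg_pos.2 h⟩
    · exact exists_sum_erase_smul_eq hf hg ⟨i, hi, h⟩
  obtain ⟨t, hts, ht, g', hg', hsum'⟩ := ih _ (Finset.erase_ssubset hj) hf'
  exact ⟨t, hts.trans (Finset.erase_subset _ _), ht, g', hg', hsum'.trans hsum⟩

end Caratheodory

/-- Linear independence and spans of integer vectors do not depend on whether the scalars are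
rational or real, so the real coefficients of an integer vector are rational. -/
lemma exists_rat_eq_of_linearIndependent {n : ℕ} {ι : Type*} [Fintype ι] {a : ι → Fin n → ℤ}
    (ha : LinearIndependent ℝ (coeR ∘ a)) {x : Fin n → ℤ} {t : ι → ℝ}
    (hx : ∑ i, t i • coeR (a i) = coeR x) : ∃ q : ι → ℚ, ∀ i, (q i : ℝ) = t i := by
  have hcast : ∀ y : Fin n → ℤ, algebraMap ℚ ℝ ∘ (fun j => (y j : ℚ)) = coeR y := fun y => by
    ext; simp [coeR]
  have haQ : LinearIndependent ℚ fun i j => (a i j : ℚ) := by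
    rw [← linearIndependent_algebraMap_comp_iff (S := ℝ)]
    convert ha using 1
    · exact funext fun i => hcast (a i)
    · rfl
  obtain ⟨q, hq⟩ : ∃ q : ι → ℚ, ∑ i, q i • (fun j => (a i j : ℚ)) = fun j => (x j : ℚ) := by
    rw [← mem_span_range_iff_exists_fun]
    by_contra hxQ
    have hR := (linearIndependent_algebraMap_comp_iff (S := ℝ)).2 (haQ.option hxQ)
    have hfam : (fun o => algebraMap ℚ ℝ ∘ Option.casesOn' o (fun j => (x j : ℚ))
        (fun i j => (a i j : ℚ))) = fun o => Option.casesOn' o (coeR x) (coeR ∘ a) := by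
      ext o; cases o <;> simp [coeR]
    rw [hfam, linearIndependent_option'] at hR
    exact hR.2 ((mem_span_range_iff_exists_fun ℝ).2 ⟨t, hx⟩)
  have hqR : ∑ i, (q i : ℝ) • coeR (a i) = coeR x := by
    ext j
    simpa [coeR, Finset.sum_apply] using congrArg (fun y : Fin n → ℚ => (y j : ℝ)) hq
  refine ⟨q, fun i => sub_eq_zero.1 ?_⟩
  refine Fintype.linearIndependent_iff.1 ha (fun i => q i - t i) ?_ i
  simp only [sub_smul, Finset.sum_sub_distrib, Function.comp_apply, hqR, hx, sub_self]

lemma exists_nat_mul_eq_natCast {ι : Type*} [Fintype ι] (q : ι → ℚ) (hq : ∀ i, 0 ≤ q i) :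
    ∃ k : ℕ, 0 < k ∧ ∀ i, ∃ m : ℕ, (k : ℚ) * q i = m := by
  classical
  refine ⟨∏ i, (q i).den, Finset.prod_pos fun i _ => (q i).pos, fun i => ?_⟩
  refine ⟨(∏ j ∈ Finset.univ.erase i, (q j).den) * (q i).num.toNat, ?_⟩
  rw [← Finset.mul_prod_erase _ _ (Finset.mem_univ i)]
  have hnum : (((q i).num.toNat : ℤ) : ℚ) = (q i).num := by
    rw [Int.toNat_of_nonneg (Rat.num_nonneg.2 (hq i))]
  push_cast at hnum ⊢
  rw [hnum, ← Rat.den_mul_eq_num]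
  ring

theorem IsPure.mem_of_coeR_mem_hull {n : ℕ} {C : Set (Fin n → ℤ)} (hpure : IsPure C)
    (hC : IsSubmonoidSet C) {x : Fin n → ℤ} (hx : coeR x ∈ PointedCone.hull ℝ (coeR '' C)) :
    x ∈ C := by
  classical
  obtain ⟨s, hsC, f, hf, hfx⟩ := PointedCone.exists_finset_of_mem_hull_image hx
  obtain ⟨t, hts, hli, g, hg, hgx⟩ := exists_linearIndepOn_sum_smul_eq coeR s fun i _ => hf i
  rw [hfx, ← Finset.sum_coe_sort t] at hgx
  obtain ⟨q, hq⟩ := exists_rat_eq_of_linearIndependent hli hgx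
  obtain ⟨k, hk, hm⟩ := exists_nat_mul_eq_natCast q fun i => by
    have := hg i i.2
    rw [← hq i] at this
    exact_mod_cast this
  choose m hm using hm
  have hkx : k • x = ∑ i : t, m i • (i : Fin n → ℤ) := by
    refine coeR_injective ?_
    simp only [← coeRHom_apply, map_sum, map_nsmul]
    simp only [coeRHom_apply, ← Nat.cast_smul_eq_nsmul ℝ, ← hgx, Finset.smul_sum, smul_smul]
    refine Finset.sum_congr rfl fun i _ => ?_
    rw [← hq i, ← Rat.cast_natCast, ← Rat.cast_natCast (m i), ← hm i, Rat.cast_mul]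
  refine hpure k x hk ?_
  rw [hkx]
  exact AddSubmonoid.sum_mem hC.toAddSubmonoid fun i _ =>
    AddSubmonoid.nsmul_mem _ (hsC (hts i.2)) _

open Filter Topology

section Topology

lemma add_mem_of_mem_closure_of_mem_nhdsWithin {E : Type*} [AddCommGroup E] [TopologicalSpace E]
    [IsTopologicalAddGroup E] {K : AddSubmonoid E} {W : AddSubgroup E}
    (hW : IsClosed (W : Set E)) (hKW : (K : Set E) ⊆ W) {w : E} (hwW : w ∈ W)
    (hw : (K : Set E) ∈ 𝓝[W] w) {x : E} (hx : x ∈ closure (K : Set E)) : x + w ∈ K := by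
  have hxW : x ∈ W := closure_minimal hKW hW hx
  have htend : Tendsto (fun p => w + (x - p)) (𝓝[K] x) (𝓝[W] w) := by
    refine tendsto_nhdsWithin_iff.2 ⟨?_, ?_⟩
    · have h : Tendsto (fun p => w + (x - p)) (𝓝 x) (𝓝 (w + (x - x))) :=
        tendsto_const_nhds.add (tendsto_const_nhds.sub tendsto_id)
      simpa using h.mono_left nhdsWithin_le_nhds
    · exact eventually_nhdsWithin_of_forall fun p hp => W.add_mem hwW (W.sub_mem hxW (hKW hp))
  have := mem_closure_iff_nhdsWithin_neBot.1 hx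
  obtain ⟨p, hp, hpK⟩ := ((htend.eventually hw).and self_mem_nhdsWithin).exists
  rw [show x + w = p + (w + (x - p)) by abel]
  exact K.add_mem hpK hp

lemma mem_closure_of_forall_natCast_smul_add_mem {E : Type*} [AddCommGroup E] [Module ℝ E]
    [TopologicalSpace E] [IsTopologicalAddGroup E] [ContinuousSMul ℝ E] {s : Set E}
    (hs : Convex ℝ s) (h0 : (0 : E) ∈ s) {x w : E} (h : ∀ m : ℕ, (m : ℝ) • x + w ∈ s) :
    x ∈ closure s := by
  have hmem : ∀ m : ℕ, x + (1 / ((m : ℝ) + 1)) • w ∈ s := fun m => by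
    have hm : (0 : ℝ) < m + 1 := by positivity
    have heq : (1 / ((m : ℝ) + 1)) • (((m + 1 : ℕ) : ℝ) • x + w) =
        x + (1 / ((m : ℝ) + 1)) • w := by
      rw [smul_add, smul_smul, Nat.cast_succ, one_div_mul_cancel hm.ne', one_smul]
    exact heq ▸ hs.smul_mem_of_zero_mem h0 (h (m + 1))
      ⟨by positivity, (div_le_one hm).2 (by linarith)⟩
  have htend : Tendsto (fun m : ℕ => x + (1 / ((m : ℝ) + 1)) • w) atTop (𝓝 x) := by
    have h := (tendsto_const_nhds (x := x)).add
      ((tendsto_one_div_add_atTop_nhds_zero_nat (𝕜 := ℝ)).smul_const w)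
    rwa [zero_smul, add_zero] at h
  exact mem_closure_of_tendsto htend (Eventually.of_forall hmem)

/-- The positive orthant is open and `t ↦ ∑ tᵢ vᵢ` is an open map onto the span. -/
lemma PointedCone.hull_range_mem_nhdsWithin_sum {E ι : Type*} [NormedAddCommGroup E]
    [NormedSpace ℝ E] [Fintype ι] (v : ι → E) :
    (PointedCone.hull ℝ (Set.range v) : Set E) ∈ 𝓝[Submodule.span ℝ (Set.range v)] ∑ i, v i := by
  set L := Fintype.linearCombination ℝ v
  set O : Set (ι → ℝ) := Set.univ.pi fun _ => Set.Ioi 0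
  have hO : IsOpen (L.rangeRestrict '' O) :=
    L.rangeRestrict.isOpenMap_of_finiteDimensional L.surjective_rangeRestrict O
      (isOpen_set_pi Set.finite_univ fun _ _ => isOpen_Ioi)
  have h1 : L 1 = ∑ i, v i := by simp [L, Fintype.linearCombination_apply]
  rw [← Fintype.range_linearCombination, ← h1,
    nhdsWithin_eq_map_subtype_coe (LinearMap.mem_range_self L 1)]
  refine Filter.mem_map.2
    (mem_of_superset (hO.mem_nhds ⟨1, fun i _ => Set.mem_Ioi.2 one_pos, rfl⟩) ?_)
  rintro _ ⟨t, ht, rfl⟩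
  change L t ∈ PointedCone.hull ℝ (Set.range v)
  rw [Fintype.linearCombination_apply]
  exact sum_mem fun i _ =>
    PointedCone.smul_mem _ (ht i trivial).le (PointedCone.subset_hull ⟨i, rfl⟩)

lemma PointedCone.hull_image_mem_nhdsWithin_sum {E F : Type*} [AddCommGroup E] [Module ℝ E]
    [NormedAddCommGroup F] [NormedSpace ℝ F] {s : Set E} {t : Finset E} (hts : ↑t ⊆ s)
    (hspan : Submodule.span ℝ (t : Set E) = Submodule.span ℝ s) (f : E →ₗ[ℝ] F) :
    (PointedCone.hull ℝ (f '' s) : Set F) ∈ 𝓝[Submodule.span ℝ (f '' s)] f (∑ x ∈ t, x) := by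
  have h := PointedCone.hull_range_mem_nhdsWithin_sum fun x : t => f x
  have hrange : Set.range (fun x : t => f x) = f '' t := by ext; simp
  rw [hrange, Submodule.span_image, hspan, ← Submodule.span_image] at h
  rw [map_sum, ← Finset.sum_coe_sort t]
  exact mem_of_superset h (Submodule.span_mono (Set.image_mono hts))

end Topology

section LatticeClosure

variable {n : ℕ}

abbrev slice (C : Set (Fin n → ℤ)) (V : Submodule ℝ (Fin n → ℝ)) : Set (Fin n → ℤ) :=
  {α ∈ C | coeR α ∈ V}

lemma IsSubmonoidSet.slice {C : Set (Fin n → ℤ)} (hC : IsSubmonoidSet C)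
    (V : Submodule ℝ (Fin n → ℝ)) : IsSubmonoidSet (slice C V) :=
  ⟨⟨hC.1, by simp [V.zero_mem]⟩, fun a ha b hb =>
    ⟨hC.2 a ha.1 b hb.1, by simpa using V.add_mem ha.2 hb.2⟩⟩

lemma comp_mem_intCl {m : ℕ} (σ : Fin m → Fin n) {A : Set (Fin n → ℤ)} {B : Set (Fin m → ℤ)}
    (hAB : ∀ α ∈ A, α ∘ σ ∈ B) {z : Fin n → ℤ} (hz : z ∈ intCl A) : z ∘ σ ∈ intCl B := by
  set f := LinearMap.funLeft ℝ ℝ σ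
  have hsub : closure (convC A) ⊆ f ⁻¹' closure (convC B) := by
    refine closure_minimal (convexHull_min ?_ ((convex_convexHull ℝ _).closure.linear_preimage f))
      (isClosed_closure.preimage f.continuous_of_finiteDimensional)
    rintro _ ⟨α, hα, rfl⟩
    exact subset_closure (subset_convexHull ℝ _ ⟨α ∘ σ, hAB α hα, rfl⟩)
  exact hsub hz

lemma coeR_mem_of_mem_intCl {A : Set (Fin n → ℤ)} {U : Submodule ℝ (Fin n → ℝ)}
    (hA : ∀ α ∈ A, coeR α ∈ U) {z : Fin n → ℤ} (hz : z ∈ intCl A) : coeR z ∈ U := by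
  refine closure_minimal (convexHull_min ?_ U.convex) U.closed_of_finiteDimensional hz
  rintro _ ⟨α, hα, rfl⟩
  exact hA α hα

lemma mem_intCl_of_forall_nsmul_add_mem {D : Set (Fin n → ℤ)} (hD : 0 ∈ D) {z w : Fin n → ℤ}
    (h : ∀ m : ℕ, m • z + w ∈ D) : z ∈ intCl D :=
  mem_closure_of_forall_natCast_smul_add_mem (convex_convexHull ℝ _)
    (subset_convexHull ℝ (coeR '' D) ⟨0, hD, coeR_zero⟩) fun m => by
      have hm := subset_convexHull ℝ (coeR '' D) ⟨_, h m, rfl⟩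
      rwa [coeR_add, coeR_nsmul] at hm

/-- `coeR w` being interior to the cone over `slice C V` (relative to `V`), the points
`coeR (m • z + w)` lie in that cone, and purity brings them back into `C`. -/
theorem IsPure.nsmul_add_mem_of_mem_intCl {C : Set (Fin n → ℤ)} (hpure : IsPure C)
    (hC : IsSubmonoidSet C) {V : Submodule ℝ (Fin n → ℝ)} {w : Fin n → ℤ} (hwV : coeR w ∈ V)
    (hw : (PointedCone.hull ℝ (coeR '' slice C V) : Set (Fin n → ℝ)) ∈ 𝓝[V] coeR w)
    {z : Fin n → ℤ} (hz : z ∈ intCl (slice C V)) (m : ℕ) : m • z + w ∈ C := by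
  set K := PointedCone.hull ℝ (coeR '' slice C V)
  have hKV : (K : Set (Fin n → ℝ)) ⊆ V := fun x hx =>
    span_le.2 (by rintro _ ⟨α, hα, rfl⟩; exact hα.2) (PointedCone.hull_le_span ℝ _ hx)
  have hz' : (m : ℝ) • coeR z ∈ closure (K : Set (Fin n → ℝ)) :=
    map_mem_closure (continuous_const_smul _)
      (closure_mono (convexHull_min PointedCone.subset_hull K.convex) hz)
      fun _ hy => K.smul_mem (Nat.cast_nonneg m) hy
  have hmem := add_mem_of_mem_closure_of_mem_nhdsWithin (K := K.toAddSubmonoid)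
    (W := V.toAddSubgroup) V.closed_of_finiteDimensional hKV hwV hw hz'
  refine hpure.mem_of_coeR_mem_hull hC ?_
  rw [coeR_add, coeR_nsmul]
  exact span_mono (Set.image_mono fun α hα => hα.1) hmem

/-- Sum a finite subfamily of `D` spanning the same real space as `D`. -/
theorem IsSubmonoidSet.exists_forall_hull_mem_nhdsWithin {D : Set (Fin n → ℤ)}
    (hD : IsSubmonoidSet D) :
    ∃ w ∈ D, ∀ {m : ℕ} (σ : Fin m → Fin n),
      (PointedCone.hull ℝ (coeR '' ((· ∘ σ) '' D)) : Set (Fin m → ℝ)) ∈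
        𝓝[span ℝ (coeR '' ((· ∘ σ) '' D))] coeR (w ∘ σ) := by
  obtain ⟨t, htD, -, hspan, -⟩ := exists_finset_span_eq_linearIndepOn ℝ (coeR '' D)
  obtain ⟨w, hwD, hw⟩ : ∃ w ∈ D, coeR w = ∑ x ∈ t, x := by
    have : ∑ x ∈ t, x ∈ hD.toAddSubmonoid.map (coeRHom n) := sum_mem fun x hx => by
      obtain ⟨α, hα, rfl⟩ := htD hx
      exact ⟨α, hα, rfl⟩
    exact AddSubmonoid.mem_map.1 this
  refine ⟨w, hwD, fun σ => ?_⟩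
  have h := PointedCone.hull_image_mem_nhdsWithin_sum htD hspan (LinearMap.funLeft ℝ ℝ σ)
  rw [← hw, Set.image_image] at h
  rw [Set.image_image]
  exact h

end LatticeClosure

theorem AddSubmonoid.FG.inf_addSubgroup {G : Type*} [AddCommGroup G] {M : AddSubmonoid G}
    (hM : M.FG) (H : AddSubgroup G) : (M ⊓ H.toAddSubmonoid).FG := by
  obtain ⟨S, rfl⟩ := hM
  set φ := (Fintype.linearCombination ℕ ((↑) : S → G)).toAddMonoidHom
  have hT : (H.toAddSubmonoid.comap φ).FG := AddSubmonoid.fg_of_subtractive fun x hx y hxy => by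
    have hy : φ y = φ (x + y) - φ x := by rw [map_add]; abel
    change φ y ∈ H
    rw [hy]
    exact H.sub_mem hxy hx
  convert hT.map φ
  ext z
  simp only [AddSubmonoid.mem_inf, AddSubmonoid.mem_map, AddSubmonoid.mem_comap,
    AddSubgroup.mem_toAddSubmonoid]
  constructor
  · rintro ⟨hz, hzH⟩
    obtain ⟨v, rfl⟩ := AddSubmonoid.mem_closure_finset'.1 hz
    exact ⟨v, hzH, by simp [φ, Fintype.linearCombination_apply]⟩
  · rintro ⟨v, hv, rfl⟩
    refine ⟨?_, hv⟩
    simp only [φ, LinearMap.toAddMonoidHom_coe, Fintype.linearCombination_apply]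
    exact AddSubmonoid.sum_mem _ fun (i : S) _ =>
      AddSubmonoid.nsmul_mem _ (AddSubmonoid.subset_closure i.2) _

lemma AddSubmonoid.FG.isFGSet {n : ℕ} {P : AddSubmonoid (Fin n → ℤ)} (hP : P.FG) :
    IsFGSet (P : Set (Fin n → ℤ)) := by
  obtain ⟨S, rfl⟩ := hP
  exact ⟨S, rfl⟩

def Fin.appendAddEquiv (M : Type*) [Add M] (m n : ℕ) :
    (Fin m → M) × (Fin n → M) ≃+ (Fin (m + n) → M) where
  __ := Fin.appendEquiv m n
  map_add' _ _ := by
    ext i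
    refine Fin.addCases (fun i => ?_) (fun i => ?_) i <;> simp

section Product

variable {d₁ d₂ : ℕ}

abbrev prodSet (C₁ : Set (Fin d₁ → ℤ)) (C₂ : Set (Fin d₂ → ℤ)) : Set (Fin (d₁ + d₂) → ℤ) :=
  {γ | (fun i => γ (Fin.castAdd d₂ i)) ∈ C₁ ∧ (fun j => γ (Fin.natAdd d₁ j)) ∈ C₂}

variable {C₁ : Set (Fin d₁ → ℤ)} {C₂ : Set (Fin d₂ → ℤ)}

lemma IsPure.prod (h₁ : IsPure C₁) (h₂ : IsPure C₂) : IsPure (prodSet C₁ C₂) :=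
  fun k _ hk hγ => ⟨h₁ k _ hk hγ.1, h₂ k _ hk hγ.2⟩

lemma IsSubmonoidSet.prod (h₁ : IsSubmonoidSet C₁) (h₂ : IsSubmonoidSet C₂) :
    IsSubmonoidSet (prodSet C₁ C₂) :=
  ⟨⟨h₁.1, h₂.1⟩, fun _ ha _ hb => ⟨h₁.2 _ ha.1 _ hb.1, h₂.2 _ ha.2 _ hb.2⟩⟩

theorem mem_intCl_slice_prodSet_iff (hC₁ : IsSubmonoidSet C₁) (hC₂ : IsSubmonoidSet C₂)
    (hpure₁ : IsPure C₁) (hpure₂ : IsPure C₂) (U : Submodule ℝ (Fin (d₁ + d₂) → ℝ))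
    {z : Fin (d₁ + d₂) → ℤ} :
    z ∈ intCl (slice (prodSet C₁ C₂) U) ↔
      (z ∘ Fin.castAdd d₂ ∈ intCl (slice C₁
          (span ℝ (coeR '' ((· ∘ Fin.castAdd d₂) '' slice (prodSet C₁ C₂) U)))) ∧
        z ∘ Fin.natAdd d₁ ∈ intCl (slice C₂
          (span ℝ (coeR '' ((· ∘ Fin.natAdd d₁) '' slice (prodSet C₁ C₂) U))))) ∧
      coeR z ∈ U := by
  set D := slice (prodSet C₁ C₂) U
  have hD : IsSubmonoidSet D := (hC₁.prod hC₂).slice U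
  have hDV₁ : ∀ γ ∈ D,
      γ ∘ Fin.castAdd d₂ ∈ slice C₁ (span ℝ (coeR '' ((· ∘ Fin.castAdd d₂) '' D))) :=
    fun γ hγ => ⟨hγ.1.1, subset_span ⟨_, ⟨γ, hγ, rfl⟩, rfl⟩⟩
  have hDV₂ : ∀ γ ∈ D,
      γ ∘ Fin.natAdd d₁ ∈ slice C₂ (span ℝ (coeR '' ((· ∘ Fin.natAdd d₁) '' D))) :=
    fun γ hγ => ⟨hγ.1.2, subset_span ⟨_, ⟨γ, hγ, rfl⟩, rfl⟩⟩
  constructor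
  · exact fun hz => ⟨⟨comp_mem_intCl _ hDV₁ hz, comp_mem_intCl _ hDV₂ hz⟩,
      coeR_mem_of_mem_intCl (fun γ hγ => hγ.2) hz⟩
  rintro ⟨⟨h₁, h₂⟩, hzU⟩
  obtain ⟨w, hwD, hw⟩ := hD.exists_forall_hull_mem_nhdsWithin
  refine mem_intCl_of_forall_nsmul_add_mem hD.1 (w := w) fun m => ⟨⟨?_, ?_⟩, ?_⟩
  · exact hpure₁.nsmul_add_mem_of_mem_intCl hC₁ (hDV₁ w hwD).2
      (mem_of_superset (hw _) (span_mono (Set.image_mono (by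
        rintro _ ⟨δ, hδ, rfl⟩; exact hDV₁ δ hδ)))) h₁ m
  · exact hpure₂.nsmul_add_mem_of_mem_intCl hC₂ (hDV₂ w hwD).2
      (mem_of_superset (hw _) (span_mono (Set.image_mono (by
        rintro _ ⟨δ, hδ, rfl⟩; exact hDV₂ δ hδ)))) h₂ m
  · rw [coeR_add, coeR_nsmul]
    exact U.add_mem (U.smul_mem _ hzU) hwD.2

theorem AlmostPrismal.prod (hC₁ : IsSubmonoidSet C₁) (hC₂ : IsSubmonoidSet C₂)
    (hp₁ : Prismal C₁) (hp₂ : Prismal C₂) : AlmostPrismal (prodSet C₁ C₂) := by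
  intro U
  obtain ⟨G₁, hG₁⟩ := hp₁.2 (span ℝ (coeR '' ((· ∘ Fin.castAdd d₂) '' slice (prodSet C₁ C₂) U)))
  obtain ⟨G₂, hG₂⟩ := hp₂.2 (span ℝ (coeR '' ((· ∘ Fin.natAdd d₁) '' slice (prodSet C₁ C₂) U)))
  set M := ((AddSubmonoid.closure (G₁ : Set (Fin d₁ → ℤ))).prod
    (AddSubmonoid.closure (G₂ : Set (Fin d₂ → ℤ)))).map (Fin.appendAddEquiv ℤ d₁ d₂).toAddMonoidHom
  set H := U.toAddSubgroup.comap (coeRHom (d₁ + d₂))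
  suffices hM : intCl (slice (prodSet C₁ C₂) U) = (M ⊓ H.toAddSubmonoid : AddSubmonoid _) by
    change IsFGSet (intCl (slice (prodSet C₁ C₂) U))
    rw [hM]
    exact ((AddSubmonoid.FG.prod ⟨G₁, rfl⟩ ⟨G₂, rfl⟩).map _).inf_addSubgroup H |>.isFGSet
  ext z
  have hz := mem_intCl_slice_prodSet_iff hC₁ hC₂ hp₁.1 hp₂.1 U (z := z)
  rw [← hG₁, ← hG₂] at hz
  simp only [M, H, SetLike.mem_coe, AddSubmonoid.mem_inf, AddSubmonoid.mem_map_equiv,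
    AddSubmonoid.mem_prod]
  exact hz

end Product

/-- The cartesian product of two prismal submonoids is prismal. -/
theorem prod_prismal {d₁ d₂ : ℕ} (C₁ : Set (Fin d₁ → ℤ)) (C₂ : Set (Fin d₂ → ℤ))
    (hC₁ : IsSubmonoidSet C₁) (hC₂ : IsSubmonoidSet C₂)
    (hp₁ : Prismal C₁) (hp₂ : Prismal C₂) :
    Prismal {γ : Fin (d₁ + d₂) → ℤ |
      (fun i => γ (Fin.castAdd d₂ i)) ∈ C₁ ∧ (fun j => γ (Fin.natAdd d₁ j)) ∈ C₂} :=
  ⟨hp₁.1.prod hp₂.1, AlmostPrismal.prod hC₁ hC₂ hp₁ hp₂⟩
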